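/- arXiv:1110.2300 — 2 statements merged into one kernel-verified Lean document; each statement's English description precedes it below -/
import Mathlib

section
/- Let K be a field, S = K[x_1, ..., x_n] the polynomial ring, and let P_1, ..., P_m ⊂ S be an arbitrary finite collection of nonzero monomial prime ideals. Then there exists a monomial ideal I ⊆ S such that the set of associated primes of S/I^s equals {P_1, ..., P_m} for every s ≥ 1; in particular Ass(I) = Ass^∞(I) = {P_1, ..., P_m}. -/
/-!
Take `I = ⋂_{G ∈ 𝓕} P_G ^ a_G`, where `P_G` is generated by the variables in `G` and the weights
`a_G = (n + 2) ^ (∑_{t ∈ G} 2 ^ t)` are superincreasing (each one is at least the sum of the smaller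
ones) and satisfy `|G| a_H < a_G` for `H ⊊ G`.

Superincreasing weights give `I ^ s = ⋂ P_G ^ (a_G s)`: an exponent vector `v` with
`a_G s ≤ deg_G v` for all `G` splits into `s` vectors with `a_G ≤ deg_G`. Induct on the heaviest
`G`: split for the other constraints, cut every piece down to a core of total degree at most
`∑_H a_H ≤ a_G`, and share out the rest of `v` so that each piece reaches `G`-degree `a_G`.

Each `P_G ^ c` is primary with radical `P_G`, since the order of a polynomial with respect to the
`G`-degree is additive. The gap condition yields, for each `G`, a monomial lying in every component
except `P_G ^ (a_G s)`, so the decomposition is minimal and, by the first uniqueness theorem, the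
associated primes of `I ^ s` are exactly the `P_G`.
-/

open MvPolynomial

/-- A monomial ideal: an ideal generated by monomials. -/
def IsMonomialIdeal {K : Type*} [Field K] {n : ℕ}
    (I : Ideal (MvPolynomial (Fin n) K)) : Prop :=
  ∃ A : Set (Fin n →₀ ℕ),
    I = Ideal.span ((fun a => (monomial a (1 : K) : MvPolynomial (Fin n) K)) '' A)

/-- A nonzero monomial prime ideal: an ideal of the form `P_F = ({x_i : i ∈ F})`
for a nonempty subset `F ⊆ {1, ..., n}`. -/
def IsNonzeroMonomialPrime {K : Type*} [Field K] {n : ℕ}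
    (P : Ideal (MvPolynomial (Fin n) K)) : Prop :=
  ∃ F : Set (Fin n), F.Nonempty ∧
    P = Ideal.span ((X : Fin n → MvPolynomial (Fin n) K) '' F)

open Finsupp

theorem Submodule.associatedPrimes_quotient {R M : Type*} [CommRing R] [AddCommGroup M]
    [Module R M] (N : Submodule R M) : associatedPrimes R (M ⧸ N) = N.associatedPrimes := by
  have hcolon : ∀ x : M, (⊥ : Submodule R (M ⧸ N)).colon {N.mkQ x} = N.colon {x} := fun x => by
    ext r
    simp [Submodule.mem_colon_singleton, ← Submodule.Quotient.mk_smul,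
      Submodule.Quotient.mk_eq_zero]
  ext I
  simp only [AssociatedPrimes.mem_iff, IsAssociatedPrime, Submodule.AssociatePrimes.mem_iff,
    Submodule.isAssociatedPrime_def]
  exact and_congr_right fun _ => N.mkQ_surjective.exists.trans (by simp only [hcolon])

def SuperincreasingOn {ι : Type*} [DecidableEq ι] (a : ι → ℕ) (𝓕 : Finset ι) : Prop :=
  ∀ G ∈ 𝓕, ∑ H ∈ 𝓕.erase G with a H ≤ a G, a H ≤ a G

namespace SuperincreasingOn

variable {ι : Type*} [DecidableEq ι] {a : ι → ℕ} {𝓕 𝓖 : Finset ι}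

theorem mono (h : SuperincreasingOn a 𝓕) (h𝓖 : 𝓖 ⊆ 𝓕) : SuperincreasingOn a 𝓖 := fun G hG =>
  (Finset.sum_le_sum_of_subset
    (Finset.filter_subset_filter _ (Finset.erase_subset_erase _ h𝓖))).trans (h G (h𝓖 hG))

theorem sum_le_of_insert {G : ι} (h : SuperincreasingOn a (insert G 𝓖)) (hG : G ∉ 𝓖)
    (hmax : ∀ H ∈ 𝓖, a H ≤ a G) : ∑ H ∈ 𝓖, a H ≤ a G := by
  simpa [Finset.erase_insert hG, Finset.filter_true_of_mem hmax] using
    h G (Finset.mem_insert_self G 𝓖)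

end SuperincreasingOn

theorem superincreasingOn_pow_of_injOn {ι : Type*} [DecidableEq ι] {b : ℕ} (hb : 2 ≤ b)
    {c : ι → ℕ} {𝓕 : Finset ι} (hc : Set.InjOn c 𝓕) :
    SuperincreasingOn (fun G => b ^ c G) 𝓕 := by
  intro G hG
  rw [← Finset.sum_image (f := fun k => b ^ k)
    (hc.mono fun H hH => Finset.mem_of_mem_erase (Finset.mem_filter.mp hH).1)]
  refine (Nat.geomSum_lt hb fun k hk => ?_).le
  obtain ⟨H, hH, rfl⟩ := Finset.mem_image.mp hk
  obtain ⟨hH', hle⟩ := Finset.mem_filter.mp hH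
  obtain ⟨hHG, hH𝓕⟩ := Finset.mem_erase.mp hH'
  exact ((Nat.pow_le_pow_iff_right hb).mp hle).lt_of_ne fun h => hHG (hc hH𝓕 hG h)

def binaryCode {n : ℕ} (G : Finset (Fin n)) : ℕ := ∑ t ∈ G, 2 ^ (t : ℕ)

theorem binaryCode_injective {n : ℕ} : Function.Injective (binaryCode (n := n)) := fun G H h =>
  Finset.map_injective Fin.valEmbedding <| Finset.geomSum_injective le_rfl <| by
    simpa [binaryCode, Finset.sum_map] using h

theorem binaryCode_strictMono {n : ℕ} : StrictMono (binaryCode (n := n)) := fun G H h => by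
  obtain ⟨t, htH, htG⟩ := Finset.exists_of_ssubset h
  exact Finset.sum_lt_sum_of_subset h.subset htH htG (by positivity) fun _ _ _ => Nat.zero_le _

theorem card_mul_pow_binaryCode_lt {n : ℕ} {G H : Finset (Fin n)} (h : H ⊂ G) :
    G.card * (n + 2) ^ binaryCode H < (n + 2) ^ binaryCode G :=
  calc G.card * (n + 2) ^ binaryCode H < (n + 2) * (n + 2) ^ binaryCode H :=
        Nat.mul_lt_mul_of_pos_right ((G.card_le_univ.trans_eq (Fintype.card_fin n)).trans_lt
          (by lia)) (by positivity)
    _ = (n + 2) ^ (binaryCode H + 1) := (pow_succ' _ _).symm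
    _ ≤ (n + 2) ^ binaryCode G := Nat.pow_le_pow_right (by lia) (binaryCode_strictMono h)

namespace Finsupp

variable {σ : Type*}

theorem weight_mono (w : σ → ℕ) : Monotone (weight w : (σ →₀ ℕ) →+ ℕ) := by
  intro v v' h
  obtain ⟨e, rfl⟩ := le_iff_exists_add.mp h
  simp

theorem one_le_weight_indicator_iff (G : Set σ) (m : σ →₀ ℕ) :
    1 ≤ weight (G.indicator 1) m ↔ ∃ i ∈ G, m i ≠ 0 := by
  classical
  simp only [weight_apply, sum, Set.indicator_apply, Pi.one_apply, smul_eq_mul, mul_ite, mul_one,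
    mul_zero, Nat.one_le_iff_ne_zero, ne_eq, Finset.sum_eq_zero_iff, mem_support_iff,
    ite_eq_right_iff, not_forall]
  tauto

/-- The degree in the variables of `G`, written as a weight so that
`MvPowerSeries.weightedOrder` applies to it. -/
noncomputable def degOn (G : Finset σ) : (σ →₀ ℕ) →+ ℕ := weight ((G : Set σ).indicator 1)

theorem degOn_apply (G : Finset σ) (v : σ →₀ ℕ) : degOn G v = ∑ t ∈ G, v t := by
  classical
  have : degOn G = ∑ t ∈ G, applyAddHom t := by
    refine addHom_ext fun t c => ?_
    simp [degOn, weight_single, Set.indicator_apply, single_apply]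
  simp [this]

theorem degOn_single_of_mem {G : Finset σ} {t : σ} (ht : t ∈ G) (c : ℕ) :
    degOn G (single t c) = c := by
  simp [degOn, weight_single, ht]

theorem degOn_mono (G : Finset σ) : Monotone (degOn G) :=
  weight_mono _

theorem degOn_le_degree (G : Finset σ) (v : σ →₀ ℕ) : degOn G v ≤ degree v := by
  rw [degOn, degree_eq_weight_one, weight_apply, weight_apply]
  exact Finset.sum_le_sum fun t _ =>
    Nat.mul_le_mul_left _ (Set.indicator_le_self' (fun _ _ => Nat.zero_le _) t)

theorem exists_le_degOn_eq {G : Finset σ} {v : σ →₀ ℕ} {c : ℕ} (hc : c ≤ degOn G v) :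
    ∃ p ≤ v, degOn G p = c ∧ degree p = c := by
  induction c with
  | zero => exact ⟨0, zero_le, map_zero _, map_zero _⟩
  | succ c ih =>
    obtain ⟨p, hpv, hpG, hp⟩ := ih (by lia)
    obtain ⟨f, rfl⟩ := le_iff_exists_add.mp hpv
    obtain ⟨t, htG, hft⟩ : ∃ t ∈ G, f t ≠ 0 := by
      refine Finset.exists_ne_zero_of_sum_ne_zero ?_
      rw [← degOn_apply]
      rw [map_add] at hc
      lia
    refine ⟨p + single t 1, add_le_add le_rfl (single_le_iff.mpr (Nat.one_le_iff_ne_zero.mpr hft)),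
      ?_, ?_⟩
    · rw [map_add, hpG, degOn_single_of_mem htG]
    · rw [map_add, hp, degree_single]

theorem exists_le_forall_le_degOn_degree_le {𝓕 : Finset (Finset σ)} {a : Finset σ → ℕ}
    {v : σ →₀ ℕ} (hv : ∀ G ∈ 𝓕, a G ≤ degOn G v) :
    ∃ u ≤ v, (∀ G ∈ 𝓕, a G ≤ degOn G u) ∧ degree u ≤ ∑ G ∈ 𝓕, a G := by
  have : ∀ G ∈ 𝓕, ∃ p ≤ v, degOn G p = a G ∧ degree p = a G := fun G hG =>
    exists_le_degOn_eq (hv G hG)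
  choose! p hpv hpG hp using this
  refine ⟨𝓕.sup p, Finset.sup_le hpv, fun G hG => ?_, ?_⟩
  · exact (hpG G hG).ge.trans (degOn_mono G (Finset.le_sup hG))
  · calc degree (𝓕.sup p) ≤ degree (∑ G ∈ 𝓕, p G) :=
          degree_mono (Finset.sup_le fun G hG => Finset.single_le_sum (fun _ _ => zero_le) hG)
      _ = ∑ G ∈ 𝓕, a G := by rw [map_sum]; exact Finset.sum_congr rfl hp

theorem exists_sum_le_forall_le_degOn (G : Finset σ) {s : ℕ} (need : Fin s → ℕ)
    {r : σ →₀ ℕ} (hr : ∑ j, need j ≤ degOn G r) :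
    ∃ q : Fin s → σ →₀ ℕ, ∑ j, q j ≤ r ∧ ∀ j, need j ≤ degOn G (q j) := by
  induction s generalizing r with
  | zero => exact ⟨0, zero_le, fun j => j.elim0⟩
  | succ s ih =>
    rw [Fin.sum_univ_succ] at hr
    obtain ⟨p, hpr, hpG, -⟩ := exists_le_degOn_eq (le_of_add_le_left hr)
    obtain ⟨f, rfl⟩ := le_iff_exists_add.mp hpr
    obtain ⟨q, hqf, hq⟩ := ih (fun j => need j.succ) (r := f) (by rw [map_add] at hr; lia)
    refine ⟨Fin.cons p q, ?_, Fin.cases hpG.ge hq⟩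
    rw [Fin.sum_univ_succ]
    exact add_le_add le_rfl hqf

theorem exists_fin_sum_eq_of_superincreasingOn [DecidableEq σ] {𝓕 : Finset (Finset σ)}
    {a : Finset σ → ℕ} (ha : SuperincreasingOn a 𝓕) {s : ℕ} (hs : s ≠ 0) {v : σ →₀ ℕ}
    (hv : ∀ G ∈ 𝓕, a G * s ≤ degOn G v) :
    ∃ w : Fin s → σ →₀ ℕ, ∑ j, w j = v ∧ ∀ j, ∀ G ∈ 𝓕, a G ≤ degOn G (w j) := by
  obtain ⟨j₀⟩ : Nonempty (Fin s) := ⟨⟨0, Nat.pos_of_ne_zero hs⟩⟩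
  induction 𝓕 using Finset.induction_on_max_value a generalizing v with
  | empty => exact ⟨Pi.single j₀ v, by simp [Finset.sum_pi_single'], by simp⟩
  | insert G 𝓖 hG hmax ih =>
    obtain ⟨w, hw, hw𝓖⟩ := ih (ha.mono (Finset.subset_insert _ _))
      fun H hH => hv H (Finset.mem_insert_of_mem hH)
    choose u huw hu𝓖 hudeg using fun j => exists_le_forall_le_degOn_degree_le (hw𝓖 j)
    have huG : ∀ j, degOn G (u j) ≤ a G := fun j =>
      (degOn_le_degree _ _).trans ((hudeg j).trans (ha.sum_le_of_insert hG hmax))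
    obtain ⟨r, hr⟩ := le_iff_exists_add.mp (hw ▸ Finset.sum_le_sum fun j _ => huw j)
    -- what is left of `v` after removing the cores tops every core up to `G`-degree `a G`
    have hneed : ∑ j, (a G - degOn G (u j)) ≤ degOn G r := by
      have h1 : degOn G v = ∑ j, degOn G (u j) + degOn G r := by rw [hr, map_add, map_sum]
      have h2 : ∑ j, (a G - degOn G (u j)) + ∑ j, degOn G (u j) = a G * s := by
        rw [← Finset.sum_add_distrib, Finset.sum_congr rfl fun j _ => tsub_add_cancel_of_le (huG j)]
        simp [mul_comm]
      have := hv G (Finset.mem_insert_self G 𝓖)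
      lia
    obtain ⟨q, hqr, hq⟩ := exists_sum_le_forall_le_degOn G _ hneed
    obtain ⟨e, he⟩ := le_iff_exists_add.mp hqr
    refine ⟨fun j => u j + q j + (Pi.single j₀ e : Fin s → σ →₀ ℕ) j, ?_, fun j H hH => ?_⟩
    · simp only [Finset.sum_add_distrib, Finset.sum_pi_single', Finset.mem_univ, if_true]
      rw [hr, he, add_assoc]
    obtain rfl | hH := Finset.mem_insert.mp hH
    · refine (tsub_le_iff_left.mp (hq j)).trans ?_
      rw [← map_add]
      exact degOn_mono _ le_self_add
    · exact (hu𝓖 j H hH).trans (degOn_mono _ (le_self_add.trans le_self_add))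

theorem exists_degOn_lt_le_degOn [Fintype σ] {𝓕 : Finset (Finset σ)} {a : Finset σ → ℕ}
    (hne : ∀ H ∈ 𝓕, H.Nonempty) {G : Finset σ} (hpos : 0 < a G)
    (hgap : ∀ H ∈ 𝓕, H ⊂ G → G.card * a H < a G) :
    ∃ u : σ →₀ ℕ, degOn G u < a G ∧ ∀ H ∈ 𝓕, H ≠ G → a H ≤ degOn H u := by
  classical
  set A := {H ∈ 𝓕 | H ⊂ G}.sup a
  set B := 𝓕.sup a
  set u : σ →₀ ℕ := equivFunOnFinite.symm fun t => if t ∈ G then A else B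
  have hu : ∀ t, u t = if t ∈ G then A else B := fun _ => rfl
  have hle : ∀ H : Finset σ, ∀ t ∈ H, u t ≤ degOn H u := fun H t ht => by
    rw [degOn_apply]
    exact Finset.single_le_sum (fun _ _ => Nat.zero_le _) ht
  refine ⟨u, ?_, fun H hH hHG => ?_⟩
  · have hA : G.card * A < a G :=
      Finset.sup_induction (p := fun x => G.card * x < a G) (by simpa)
        (fun x hx y hy => by rcases le_total x y with h | h <;> simpa [h])
        fun H hH => hgap H (Finset.mem_filter.mp hH).1 (Finset.mem_filter.mp hH).2
    rwa [degOn_apply, Finset.sum_congr rfl fun t ht => (hu t).trans (if_pos ht), Finset.sum_const,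
      smul_eq_mul]
  by_cases hHG' : H ⊆ G
  · obtain ⟨t, ht⟩ := hne H hH
    calc a H ≤ A := Finset.le_sup (Finset.mem_filter.mpr ⟨hH, hHG'.ssubset_of_ne hHG⟩)
      _ = u t := by rw [hu, if_pos (hHG' ht)]
      _ ≤ degOn H u := hle H t ht
  · obtain ⟨t, htH, htG⟩ := Finset.not_subset.mp hHG'
    calc a H ≤ B := Finset.le_sup hH
      _ = u t := by rw [hu, if_neg htG]
      _ ≤ degOn H u := hle H t htH

end Finsupp

theorem MvPowerSeries.weightedOrder_pow {σ R : Type*} [CommSemiring R] [NoZeroDivisors R]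
    [Nontrivial R] (w : σ → ℕ) (f : MvPowerSeries σ R) (k : ℕ) :
    (f ^ k).weightedOrder w = k • f.weightedOrder w := by
  simpa using weightedOrder_prod w (fun _ => f) (Finset.range k)

namespace MvPolynomial

variable {σ R : Type*}

section CommSemiring

variable [CommSemiring R]

theorem mem_span_monomial_image_iff_of_isUpperSet {s : Set (σ →₀ ℕ)} (hs : IsUpperSet s)
    {f : MvPolynomial σ R} :
    f ∈ Ideal.span ((monomial · (1 : R)) '' s) ↔ ∀ d ∈ f.support, d ∈ s := by
  rw [mem_ideal_span_monomial_image]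
  exact forall₂_congr fun d _ => ⟨fun ⟨e, he, hed⟩ => hs hed he, fun hd => ⟨d, hd, le_rfl⟩⟩

variable (R) in
/-- For the indicator weight of `G` this is `P_G ^ c`. -/
noncomputable def weightIdeal (w : σ → ℕ) (c : ℕ) : Ideal (MvPolynomial σ R) :=
  Ideal.span ((monomial · 1) '' {d | c ≤ weight w d})

variable {w : σ → ℕ} {c : ℕ} {f : MvPolynomial σ R}

theorem mem_weightIdeal : f ∈ weightIdeal R w c ↔ ∀ d ∈ f.support, c ≤ weight w d :=
  mem_span_monomial_image_iff_of_isUpperSet fun _ _ hde hd => hd.trans (weight_mono w hde)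

theorem monomial_one_mem_weightIdeal [Nontrivial R] {d : σ →₀ ℕ} :
    monomial d (1 : R) ∈ weightIdeal R w c ↔ c ≤ weight w d := by
  classical
  simp [mem_weightIdeal, support_monomial]

theorem mem_weightIdeal_iff_le_weightedOrder :
    f ∈ weightIdeal R w c ↔ c ≤ (f : MvPowerSeries σ R).weightedOrder w := by
  rw [mem_weightIdeal]
  refine ⟨fun h => MvPowerSeries.nat_le_weightedOrder w fun d hd => ?_, fun h d hd => ?_⟩
  · rw [coeff_coe, ← notMem_support_iff]
    exact fun hmem => (h d hmem).not_gt hd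
  · exact_mod_cast h.trans
      (MvPowerSeries.weightedOrder_le w (by rwa [coeff_coe, ← mem_support_iff]))

theorem weightIdeal_zero : weightIdeal R w 0 = ⊤ :=
  (Ideal.eq_top_iff_one _).mpr (mem_weightIdeal.mpr fun _ _ => Nat.zero_le _)

theorem weightIdeal_mul_le (a b : ℕ) :
    weightIdeal R w a * weightIdeal R w b ≤ weightIdeal R w (a + b) := by
  refine Ideal.mul_le.mpr fun f hf g hg => ?_
  rw [mem_weightIdeal_iff_le_weightedOrder] at hf hg ⊢
  rw [coe_mul, Nat.cast_add]
  exact (add_le_add hf hg).trans (MvPowerSeries.le_weightedOrder_mul w)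

theorem weightIdeal_pow_le (a s : ℕ) : weightIdeal R w a ^ s ≤ weightIdeal R w (a * s) := by
  induction s with
  | zero => simp [Ideal.one_eq_top, weightIdeal_zero]
  | succ s ih =>
    rw [pow_succ, Nat.mul_succ]
    exact (Ideal.mul_mono_left ih).trans (weightIdeal_mul_le _ _)

theorem span_X_image_eq_weightIdeal (G : Set σ) :
    Ideal.span (X '' G) = weightIdeal R (G.indicator 1) 1 := by
  ext f
  rw [mem_ideal_span_X_image, mem_weightIdeal]
  exact forall₂_congr fun m _ => (one_le_weight_indicator_iff G m).symm

theorem X_mem_span_X_image_iff [Nontrivial R] {G : Set σ} {i : σ} :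
    X i ∈ Ideal.span (X '' G : Set (MvPolynomial σ R)) ↔ i ∈ G := by
  classical
  simp [mem_ideal_span_X_image, support_X, Finsupp.single_apply]

end CommSemiring

section NoZeroDivisors

variable [CommSemiring R] [NoZeroDivisors R] [Nontrivial R] {w : σ → ℕ} {c : ℕ}

theorem radical_weightIdeal (hc : c ≠ 0) : (weightIdeal R w c).radical = weightIdeal R w 1 := by
  refine le_antisymm (fun f hf => ?_) fun f hf => ⟨c, ?_⟩
  · obtain ⟨k, hk⟩ := hf
    rw [mem_weightIdeal_iff_le_weightedOrder, coe_pow, MvPowerSeries.weightedOrder_pow] at hk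
    rw [mem_weightIdeal_iff_le_weightedOrder, Nat.cast_one, Order.one_le_iff_ne_zero]
    rintro h0
    rw [h0, smul_zero] at hk
    exact hc (by exact_mod_cast nonpos_iff_eq_zero.mp hk)
  · simpa using weightIdeal_pow_le (R := R) (w := w) 1 c (Ideal.pow_mem_pow hf c)

theorem weightIdeal_isPrimary (hc : c ≠ 0) : (weightIdeal R w c).IsPrimary := by
  refine Ideal.isPrimary_iff.mpr ⟨fun h => ?_, fun {f g} hfg => ?_⟩
  · have h1 : monomial (0 : σ →₀ ℕ) (1 : R) ∈ weightIdeal R w c := h ▸ Submodule.mem_top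
    rw [monomial_one_mem_weightIdeal, map_zero] at h1
    exact hc (Nat.le_zero.mp h1)
  rw [radical_weightIdeal hc]
  by_cases hg : g ∈ weightIdeal R w 1
  · exact .inr hg
  rw [mem_weightIdeal_iff_le_weightedOrder, Nat.cast_one, Order.one_le_iff_ne_zero, not_not] at hg
  rw [mem_weightIdeal_iff_le_weightedOrder, coe_mul, MvPowerSeries.weightedOrder_mul, hg,
    add_zero] at hfg
  exact .inl (mem_weightIdeal_iff_le_weightedOrder.mpr hfg)

theorem radical_weightIdeal_indicator (hc : c ≠ 0) (G : Set σ) :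
    (weightIdeal R (G.indicator 1) c).radical = Ideal.span (X '' G) := by
  rw [radical_weightIdeal hc, span_X_image_eq_weightIdeal]

end NoZeroDivisors

variable (R) in
/-- The monomial ideal `⋂_{G ∈ 𝓕} P_G ^ (a_G s)`, see `infPowIdeal_eq_inf`. -/
noncomputable def infPowIdeal [CommSemiring R] (𝓕 : Finset (Finset σ)) (a : Finset σ → ℕ)
    (s : ℕ) : Ideal (MvPolynomial σ R) :=
  Ideal.span ((monomial · 1) '' {d | ∀ G ∈ 𝓕, a G * s ≤ degOn G d})

section infPowIdeal

variable {𝓕 : Finset (Finset σ)} {a : Finset σ → ℕ} {s : ℕ}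

theorem mem_infPowIdeal [CommSemiring R] {f : MvPolynomial σ R} :
    f ∈ infPowIdeal R 𝓕 a s ↔
      ∀ G ∈ 𝓕, f ∈ weightIdeal R ((G : Set σ).indicator 1) (a G * s) := by
  rw [infPowIdeal, mem_span_monomial_image_iff_of_isUpperSet
    fun d e hde hd G hG => (hd G hG).trans (degOn_mono G hde)]
  simp_rw [mem_weightIdeal]
  exact ⟨fun h G hG d hd => h d hd G hG, fun h d hd G hG => h G hG d hd⟩

theorem infPowIdeal_eq_inf [CommSemiring R] :
    infPowIdeal R 𝓕 a s = 𝓕.inf fun G => weightIdeal R ((G : Set σ).indicator 1) (a G * s) := by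
  ext f
  rw [mem_infPowIdeal, Submodule.mem_finsetInf]

theorem infPowIdeal_pow [CommSemiring R] [DecidableEq σ] (ha : SuperincreasingOn a 𝓕)
    (hs : s ≠ 0) : infPowIdeal R 𝓕 a 1 ^ s = infPowIdeal R 𝓕 a s := by
  refine le_antisymm (fun f hf => mem_infPowIdeal.mpr fun G hG => ?_) (Ideal.span_le.mpr ?_)
  · have hle : infPowIdeal R 𝓕 a 1 ≤ weightIdeal R ((G : Set σ).indicator 1) (a G) :=
      fun g hg => by simpa using mem_infPowIdeal.mp hg G hG
    exact weightIdeal_pow_le _ s (Ideal.pow_right_mono hle s hf)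
  rintro _ ⟨v, hv, rfl⟩
  obtain ⟨w, rfl, hw⟩ := exists_fin_sum_eq_of_superincreasingOn ha hs hv
  have := Ideal.prod_mem_prod (s := Finset.univ) (I := fun _ => infPowIdeal R 𝓕 a 1)
    fun j _ => Ideal.subset_span ⟨w j, by simpa using hw j, rfl⟩
  rwa [Finset.prod_const, Finset.card_univ, Fintype.card_fin, ← monomial_sum_one] at this

theorem isMinimalPrimaryDecomposition_infPowIdeal [CommSemiring R] [NoZeroDivisors R]
    [Nontrivial R]
    (hsep : ∀ G ∈ 𝓕, ∃ u, degOn G u < a G ∧ ∀ H ∈ 𝓕, H ≠ G → a H ≤ degOn H u)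
    (hs : s ≠ 0) :
    Submodule.IsMinimalPrimaryDecomposition (infPowIdeal R 𝓕 a s)
      (𝓕.image fun G : Finset σ => weightIdeal R ((G : Set σ).indicator 1) (a G * s)) := by
  set J := fun G : Finset σ => weightIdeal R ((G : Set σ).indicator 1) (a G * s)
  have hne : ∀ G ∈ 𝓕, a G * s ≠ 0 := fun G hG => by
    obtain ⟨u, hu, -⟩ := hsep G hG
    exact mul_ne_zero (by lia) hs
  refine ⟨by rw [Finset.inf_image, infPowIdeal_eq_inf]; rfl, ?_, ?_, ?_⟩
  · simp only [Finset.mem_image]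
    rintro _ ⟨G, hG, rfl⟩
    exact weightIdeal_isPrimary (hne G hG)
  · simp only [Finset.coe_image]
    rintro _ ⟨G, hG, rfl⟩ _ ⟨H, hH, rfl⟩ hJ
    rw [Function.onFun, Submodule.colon_univ, Submodule.colon_univ,
      radical_weightIdeal_indicator (hne G hG), radical_weightIdeal_indicator (hne H hH)]
    refine fun h => hJ (congrArg J (Finset.coe_injective (Set.ext fun t => ?_)))
    rw [← X_mem_span_X_image_iff (R := R), h, X_mem_span_X_image_iff]
  simp only [Finset.mem_image]
  rintro _ ⟨G, hG, rfl⟩ hle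
  obtain ⟨u, hu, hle'⟩ := hsep G hG
  have hmem : monomial (s • u) (1 : R) ∈ ((𝓕.image J).erase (J G)).inf id := by
    refine Submodule.mem_finsetInf.mpr fun J' hJ' => ?_
    obtain ⟨hJ'G, hJ'⟩ := Finset.mem_erase.mp hJ'
    obtain ⟨H, hH, rfl⟩ := Finset.mem_image.mp hJ'
    rw [id, monomial_one_mem_weightIdeal]
    change a H * s ≤ degOn H (s • u)
    rw [map_nsmul, smul_eq_mul, mul_comm]
    exact Nat.mul_le_mul_left s (hle' H hH fun h => hJ'G (h ▸ rfl))
  have hGu : a G * s ≤ degOn G (s • u) := monomial_one_mem_weightIdeal.mp (hle hmem)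
  rw [map_nsmul, smul_eq_mul, mul_comm] at hGu
  exact hGu.not_gt (Nat.mul_lt_mul_of_pos_left hu (Nat.pos_of_ne_zero hs))

theorem associatedPrimes_infPowIdeal [CommRing R] [IsDomain R]
    (hsep : ∀ G ∈ 𝓕, ∃ u, degOn G u < a G ∧ ∀ H ∈ 𝓕, H ≠ G → a H ≤ degOn H u)
    (hs : s ≠ 0) :
    associatedPrimes (MvPolynomial σ R) (MvPolynomial σ R ⧸ infPowIdeal R 𝓕 a s) =
      (fun G : Finset σ => Ideal.span (X '' (G : Set σ))) '' 𝓕 := by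
  rw [Submodule.associatedPrimes_quotient,
    ← (isMinimalPrimaryDecomposition_infPowIdeal hsep hs).image_radical_eq_associated_primes,
    Finset.coe_image, Set.image_image]
  refine Set.image_congr fun G hG => ?_
  obtain ⟨u, hu, -⟩ := hsep G hG
  rw [Submodule.colon_univ, radical_weightIdeal_indicator (mul_ne_zero (by lia) hs)]

end infPowIdeal

theorem exists_associatedPrimes_pow_eq [CommRing R] [IsDomain R] {n : ℕ}
    (𝓕 : Finset (Finset (Fin n))) (hne : ∀ G ∈ 𝓕, G.Nonempty) :
    ∃ A : Set (Fin n →₀ ℕ), ∀ s ≠ 0,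
      associatedPrimes (MvPolynomial (Fin n) R)
          (MvPolynomial (Fin n) R ⧸ Ideal.span ((monomial · (1 : R)) '' A) ^ s) =
        (fun G : Finset (Fin n) => Ideal.span (X '' (G : Set (Fin n)))) '' 𝓕 := by
  set a := fun G : Finset (Fin n) => (n + 2) ^ binaryCode G
  refine ⟨{d | ∀ G ∈ 𝓕, a G * 1 ≤ degOn G d}, fun s hs => ?_⟩
  rw [show Ideal.span _ = infPowIdeal R 𝓕 a 1 from rfl,
    infPowIdeal_pow (superincreasingOn_pow_of_injOn (by lia) binaryCode_injective.injOn) hs]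
  exact associatedPrimes_infPowIdeal (fun G _ => exists_degOn_lt_le_degOn (a := a) hne
    (by positivity) fun H _ h => card_mul_pow_binaryCode_lt h) hs

end MvPolynomial

/-- For any finite collection of nonzero monomial prime ideals `P_1, ..., P_m`
there is a monomial ideal `I` with `Ass(S/I^s) = {P_1, ..., P_m}` for every
`s ≥ 1`; in particular `Ass(I) = Ass^∞(I) = {P_1, ..., P_m}`. -/
theorem stmt4 {K : Type*} [Field K] (n m : ℕ)
    (P : Fin m → Ideal (MvPolynomial (Fin n) K))
    (hP : ∀ i, IsNonzeroMonomialPrime (P i)) :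
    ∃ I : Ideal (MvPolynomial (Fin n) K), IsMonomialIdeal I ∧
      ∀ s : ℕ, 1 ≤ s →
        associatedPrimes (MvPolynomial (Fin n) K) (MvPolynomial (Fin n) K ⧸ I ^ s) =
          Set.range P := by
  classical
  choose F hFne hPF using hP
  obtain ⟨A, hA⟩ := exists_associatedPrimes_pow_eq (R := K)
    (Finset.univ.image fun i => (F i).toFinset) (by simpa using hFne)
  refine ⟨_, ⟨A, rfl⟩, fun s hs => ?_⟩
  rw [hA s (by lia), Finset.coe_image, Finset.coe_univ, Set.image_univ, ← Set.range_comp]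
  exact congrArg Set.range (funext fun i => by simp [hPF])
end

section
/- Let K be a field, S = K[x_1, ..., x_n] the polynomial ring, and let P_1, ..., P_m ⊂ S be pairwise distinct nonzero monomial prime ideals such that P_j is not contained in P_i whenever i < j. Then there exist positive integers k_1, ..., k_m such that for every positive integer t, the set of associated primes of S/(P_1^{t k_1} ∩ P_2^{t k_2} ∩ ... ∩ P_m^{t k_m}) equals {P_1, ..., P_m}. -/
/-!
Give the variables indexed by `F` weight one and all others weight zero. Then `P_F ^ k` consists
of the polynomials of weighted order at least `k`, and weighted order is additive on products
(computed in the power series ring, a domain). Hence `P_F ^ k` is `P_F`-primary, which gives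
`Ass ⊆ {P_1, ..., P_m}`, and `r * x^d ∈ P_F ^ k ↔ r ∈ P_F` whenever `x^d` has weight
`k - 1`.
So `P_i` is associated once some monomial `x^d` has `F_i`-weight `e_i - 1` and `F_j`-weight at
least `e_j` for `j ≠ i`. For `e_j = t * 2 ^ j` such a `d` exists: place `e_j` on a variable of
`F_j \ F_i` when `j > i` and on any variable of `F_j` when `j < i`; this costs at most
`∑_{j<i} e_j < e_i` in `F_i`-weight, and a variable of `F_i` tops it up to `e_i - 1`.
-/

open MvPolynomial

section AssociatedPrimes

variable {R : Type*} [CommRing R]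

theorem colon_bot_quotient_mk (I : Ideal R) (x : R) :
    (⊥ : Submodule R (R ⧸ I)).colon {Ideal.Quotient.mk I x} = I.colon {x} := by
  ext r
  rw [Submodule.mem_colon_singleton, Submodule.mem_colon_singleton, Submodule.mem_bot,
    Algebra.smul_def, Ideal.Quotient.algebraMap_eq, ← map_mul, Ideal.Quotient.eq_zero_iff_mem,
    smul_eq_mul]

theorem mem_associatedPrimes_quotient_of_colon_eq {I p : Ideal R} (hp : p.IsPrime) {x : R}
    (hx : I.colon {x} = p) : p ∈ associatedPrimes R (R ⧸ I) :=
  ⟨hp, Ideal.Quotient.mk I x, by rw [colon_bot_quotient_mk, hx, hp.radical]⟩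

theorem associatedPrimes_quotient_iInf_subset {ι : Type*} [Finite ι] {Q : ι → Ideal R}
    (hQ : ∀ i, (Q i).IsPrimary) :
    associatedPrimes R (R ⧸ ⨅ i, Q i) ⊆ Set.range fun i => (Q i).radical := by
  classical
  have := Fintype.ofFinite ι
  rintro p ⟨hp, x, hpx⟩
  obtain ⟨y, rfl⟩ := Ideal.Quotient.mk_surjective x
  rw [colon_bot_quotient_mk, Submodule.iInf_colon] at hpx
  let T := Finset.univ.filter fun i => y ∉ Q i
  have hTp : T.inf Q ≤ p := by
    refine le_trans ?_ (hpx ▸ Ideal.le_radical)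
    refine le_iInf fun i => ?_
    by_cases hi : y ∈ Q i
    · rw [(Submodule.colon_eq_top_iff_subset _).mpr (Set.singleton_subset_iff.mpr hi)]
      exact le_top
    · exact (Finset.inf_le (Finset.mem_filter.mpr ⟨Finset.mem_univ i, hi⟩)).trans
        Ideal.le_colon
  obtain ⟨i, hiT, hQip⟩ := hp.inf_le'.mp hTp
  refine ⟨i, le_antisymm ((hp.radical_le_iff).mpr hQip) ?_⟩
  change p ≤ (Q i).radical
  rw [hpx, ← Submodule.colon_univ (I := Q i),
    ← (hQ i).radical_colon_singleton_of_notMem (Finset.mem_filter.mp hiT).2]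
  exact Ideal.radical_mono (iInf_le _ i)

end AssociatedPrimes

namespace MvPowerSeries

variable {σ R : Type*}

section Semiring

variable [Semiring R]

def weightedOrderIdeal (w : σ → ℕ) (k : ℕ) : Ideal (MvPowerSeries σ R) where
  carrier := {f | k ≤ f.weightedOrder w}
  zero_mem' := by simp
  add_mem' {f g} hf hg := (le_min hf hg).trans (min_weightedOrder_le_add w)
  smul_mem' c f hf := hf.trans (le_add_self.trans (le_weightedOrder_mul w))

variable {w : σ → ℕ} {k : ℕ} {f g : MvPowerSeries σ R}

theorem mem_weightedOrderIdeal : f ∈ weightedOrderIdeal w k ↔ k ≤ f.weightedOrder w := Iff.rfl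

theorem pow_mem_weightedOrderIdeal (hf : f ∈ weightedOrderIdeal w 1) :
    f ^ k ∈ weightedOrderIdeal w k := by
  refine le_trans ?_ (le_weightedOrder_pow w k)
  simpa using nsmul_le_nsmul_right (mem_weightedOrderIdeal.mp hf) k

theorem mul_mem_weightedOrderIdeal {a b : ℕ} (hf : f ∈ weightedOrderIdeal w a)
    (hg : g ∈ weightedOrderIdeal w b) : f * g ∈ weightedOrderIdeal w (a + b) := by
  rw [mem_weightedOrderIdeal, Nat.cast_add]
  exact (add_le_add hf hg).trans (le_weightedOrder_mul w)

theorem weightedOrderIdeal_ne_top [Nontrivial R] (hk : k ≠ 0) :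
    weightedOrderIdeal w k ≠ (⊤ : Ideal (MvPowerSeries σ R)) := by
  rw [Ne, Ideal.eq_top_iff_one, mem_weightedOrderIdeal, weightedOrder_one]
  exact_mod_cast Nat.pos_of_ne_zero hk |>.not_ge

end Semiring

variable [CommSemiring R] [NoZeroDivisors R] {w : σ → ℕ} {k : ℕ} {f g : MvPowerSeries σ R}

theorem mem_weightedOrderIdeal_of_mul_mem (hfg : f * g ∈ weightedOrderIdeal w k)
    (hg : g ∉ weightedOrderIdeal w 1) : f ∈ weightedOrderIdeal w k := by
  rw [mem_weightedOrderIdeal, weightedOrder_mul] at hfg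
  rw [mem_weightedOrderIdeal, Nat.cast_one, Order.one_le_iff_ne_zero, not_not] at hg
  rwa [hg, add_zero] at hfg

variable [Nontrivial R]

theorem isPrime_weightedOrderIdeal_one :
    (weightedOrderIdeal w 1 : Ideal (MvPowerSeries σ R)).IsPrime :=
  ⟨weightedOrderIdeal_ne_top one_ne_zero, fun hfg =>
    or_iff_not_imp_right.mpr (mem_weightedOrderIdeal_of_mul_mem hfg)⟩

theorem isPrimary_weightedOrderIdeal (hk : k ≠ 0) :
    (weightedOrderIdeal w k : Ideal (MvPowerSeries σ R)).IsPrimary :=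
  Ideal.isPrimary_iff.mpr ⟨weightedOrderIdeal_ne_top hk, fun hfg =>
    or_iff_not_imp_left.mpr fun hf => ⟨k, pow_mem_weightedOrderIdeal <| by
      by_contra hg
      exact hf (mem_weightedOrderIdeal_of_mul_mem hfg hg)⟩⟩

end MvPowerSeries

namespace MvPolynomial

open MvPowerSeries (weightedOrderIdeal mem_weightedOrderIdeal)

variable {σ R : Type*}

section CommSemiring

variable [CommSemiring R]

theorem monomial_mem_span_X_image_pow (s : Set σ) (d : σ →₀ ℕ) (a : R) :
    monomial d a ∈
      Ideal.span (X '' s : Set (MvPolynomial σ R)) ^ Finsupp.weight (s.indicator 1) d := by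
  induction d using Finsupp.induction generalizing a with
  | zero => simp
  | single_add i b d _ _ ih =>
    rw [← one_mul a, ← monomial_mul, ← X_pow_eq_monomial, map_add, Finsupp.weight_single]
    by_cases hi : i ∈ s
    · rw [Set.indicator_of_mem hi, Pi.one_apply, smul_eq_mul, mul_one, pow_add]
      exact Ideal.mul_mem_mul
        (Ideal.pow_mem_pow (Ideal.subset_span (Set.mem_image_of_mem X hi)) b) (ih a)
    · rw [Set.indicator_of_notMem hi, smul_zero, zero_add]
      exact Ideal.mul_mem_left _ _ (ih a)

theorem span_X_image_le_comap_weightedOrderIdeal (s : Set σ) :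
    Ideal.span (X '' s : Set (MvPolynomial σ R)) ≤
      (weightedOrderIdeal (s.indicator 1) 1).comap coeToMvPowerSeries.ringHom := by
  classical
  rw [Ideal.span_le]
  rintro _ ⟨i, hi, rfl⟩
  rw [SetLike.mem_coe, Ideal.mem_comap, coeToMvPowerSeries.ringHom_apply, X, coe_monomial,
    mem_weightedOrderIdeal, MvPowerSeries.weightedOrder_monomial]
  split_ifs <;> simp [Finsupp.weight_single, hi]

theorem span_X_image_pow_eq_comap (s : Set σ) (k : ℕ) :
    Ideal.span (X '' s : Set (MvPolynomial σ R)) ^ k =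
      (weightedOrderIdeal (s.indicator 1) k).comap coeToMvPowerSeries.ringHom := by
  apply le_antisymm
  · induction k with
    | zero => intro f _; simp [mem_weightedOrderIdeal]
    | succ k ih =>
      rw [pow_succ]
      refine Ideal.mul_le.mpr fun f hf g hg => ?_
      rw [Ideal.mem_comap, map_mul]
      exact MvPowerSeries.mul_mem_weightedOrderIdeal (ih hf)
        (span_X_image_le_comap_weightedOrderIdeal s hg)
  · intro f hf
    rw [Ideal.mem_comap, mem_weightedOrderIdeal, coeToMvPowerSeries.ringHom_apply] at hf
    rw [f.as_sum]
    refine Ideal.sum_mem _ fun d hd =>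
      Ideal.pow_le_pow_right ?_ (monomial_mem_span_X_image_pow s d _)
    have := hf.trans (MvPowerSeries.weightedOrder_le _ (by rwa [coeff_coe, ← mem_support_iff]))
    exact_mod_cast this

section NoZeroDivisors

variable [NoZeroDivisors R] [Nontrivial R]

theorem isPrime_span_X_image (s : Set σ) :
    (Ideal.span (X '' s : Set (MvPolynomial σ R))).IsPrime := by
  rw [← pow_one (Ideal.span _), span_X_image_pow_eq_comap]
  exact MvPowerSeries.isPrime_weightedOrderIdeal_one.comap _

theorem isPrimary_span_X_image_pow (s : Set σ) {k : ℕ} (hk : k ≠ 0) :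
    (Ideal.span (X '' s : Set (MvPolynomial σ R)) ^ k).IsPrimary := by
  rw [span_X_image_pow_eq_comap]
  exact (MvPowerSeries.isPrimary_weightedOrderIdeal hk).comap _

theorem radical_span_X_image_pow (s : Set σ) {k : ℕ} (hk : k ≠ 0) :
    (Ideal.span (X '' s : Set (MvPolynomial σ R)) ^ k).radical = Ideal.span (X '' s) := by
  rw [Ideal.radical_pow _ hk, (isPrime_span_X_image s).radical]

theorem mul_monomial_mem_span_X_image_pow_iff (s : Set σ) (d : σ →₀ ℕ) (j : ℕ)
    (f : MvPolynomial σ R) :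
    f * monomial d 1 ∈ Ideal.span (X '' s) ^ (j + Finsupp.weight (s.indicator 1) d) ↔
      f ∈ Ideal.span (X '' s) ^ j := by
  rw [span_X_image_pow_eq_comap, span_X_image_pow_eq_comap, Ideal.mem_comap, Ideal.mem_comap,
    mem_weightedOrderIdeal, mem_weightedOrderIdeal, map_mul, coeToMvPowerSeries.ringHom_apply,
    coeToMvPowerSeries.ringHom_apply, coe_monomial, MvPowerSeries.weightedOrder_mul,
    MvPowerSeries.weightedOrder_monomial_of_ne_zero _ one_ne_zero, Nat.cast_add,
    ENat.add_le_add_iff_right (ENat.natCast_ne_top _)]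

end NoZeroDivisors

end CommSemiring

variable [CommRing R] [IsDomain R]

theorem span_X_image_mem_associatedPrimes {ι : Type*} {F : ι → Set σ} {e : ι → ℕ} {i : ι}
    {d : σ →₀ ℕ} (hdi : Finsupp.weight ((F i).indicator 1) d + 1 = e i)
    (hdj : ∀ j ≠ i, e j ≤ Finsupp.weight ((F j).indicator 1) d) :
    Ideal.span (X '' F i) ∈ associatedPrimes (MvPolynomial σ R)
      (MvPolynomial σ R ⧸ ⨅ j, Ideal.span (X '' F j : Set (MvPolynomial σ R)) ^ e j) := by
  refine mem_associatedPrimes_quotient_of_colon_eq (isPrime_span_X_image _) (x := monomial d 1) ?_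
  have hi : ∀ f : MvPolynomial σ R,
      f * monomial d 1 ∈ Ideal.span (X '' F i) ^ e i ↔ f ∈ Ideal.span (X '' F i) := by
    intro f
    rw [← hdi, add_comm, mul_monomial_mem_span_X_image_pow_iff, pow_one]
  ext f
  rw [Submodule.mem_colon_singleton, smul_eq_mul, Submodule.mem_iInf]
  refine ⟨fun h => (hi f).mp (h i), fun hf j => ?_⟩
  by_cases hji : j = i
  · exact hji ▸ (hi f).mpr hf
  · exact Ideal.mul_mem_left _ _
      (Ideal.pow_le_pow_right (hdj j hji) (monomial_mem_span_X_image_pow _ d 1))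

end MvPolynomial

open Finset Finsupp in
theorem exists_weight_indicator_succ_eq_and_le {σ ι : Type*} [LinearOrder ι] [Fintype ι]
    [LocallyFiniteOrderBot ι] {F : ι → Set σ} (hF : ∀ j, (F j).Nonempty)
    (hnc : ∀ i j, i < j → ¬ F j ⊆ F i) {e : ι → ℕ} (he : ∀ i, ∑ j ∈ Iio i, e j < e i)
    (i : ι) :
    ∃ d : σ →₀ ℕ, weight ((F i).indicator 1) d + 1 = e i ∧
      ∀ j ≠ i, e j ≤ weight ((F j).indicator 1) d := by
  classical
  have hc : ∀ j, ∃ c ∈ F j, i < j → c ∉ F i := fun j => by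
    by_cases hij : i < j
    · obtain ⟨c, hcj, hci⟩ := Set.not_subset.mp (hnc i j hij)
      exact ⟨c, hcj, fun _ => hci⟩
    · obtain ⟨c, hc⟩ := hF j
      exact ⟨c, hc, fun h => absurd h hij⟩
  choose c hcF hcnot using hc
  have weight_single_c : ∀ j k, weight ((F j).indicator 1) (single (c k) (e k)) =
      if c k ∈ F j then e k else 0 := fun j k => by
    by_cases h : c k ∈ F j <;> simp [weight_single, h]
  let base : σ →₀ ℕ := ∑ j ∈ univ.erase i, single (c j) (e j)
  have hbase : weight ((F i).indicator 1) base < e i := calc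
    _ = ∑ j ∈ univ.erase i, if c j ∈ F i then e j else 0 := by
        simp only [base, map_sum, weight_single_c]
    _ = ∑ j ∈ (univ.erase i).filter (c · ∈ F i), e j := (sum_filter _ _).symm
    _ ≤ ∑ j ∈ Iio i, e j := sum_le_sum_of_subset fun j hj => by
        obtain ⟨hj, hcj⟩ := mem_filter.mp hj
        exact mem_Iio.mpr <| lt_of_le_of_ne (not_lt.mp (mt (hcnot j) (not_not.mpr hcj)))
          (ne_of_mem_erase hj)
    _ < e i := he i
  refine ⟨base + single (c i) (e i - 1 - weight ((F i).indicator 1) base), ?_, fun j hji => ?_⟩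
  · rw [map_add, weight_single, Set.indicator_of_mem (hcF i)]
    simp only [Pi.one_apply, smul_eq_mul, mul_one]
    omega
  · calc e j = weight ((F j).indicator 1) (single (c j) (e j)) := by
          rw [weight_single_c, if_pos (hcF j)]
      _ ≤ weight ((F j).indicator 1) base := by
          rw [map_sum]
          exact single_le_sum (f := fun k => weight ((F j).indicator 1) (single (c k) (e k)))
            (fun _ _ => Nat.zero_le _) (mem_erase.mpr ⟨hji, mem_univ j⟩)
      _ ≤ _ := by rw [map_add]; exact le_self_add

theorem Fin.sum_Iio_mul_two_pow_lt {m t : ℕ} (ht : 0 < t) (i : Fin m) :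
    ∑ j ∈ Finset.Iio i, t * 2 ^ (j : ℕ) < t * 2 ^ (i : ℕ) := by
  rw [← Finset.mul_sum]
  refine Nat.mul_lt_mul_of_pos_left ?_ ht
  have := Finset.sum_map (Finset.Iio i) Fin.valEmbedding (fun k => 2 ^ k)
  rw [Fin.map_valEmbedding_Iio] at this
  exact this ▸ Nat.geomSum_lt le_rfl fun k hk => Finset.mem_Iio.mp hk

theorem stmt5_general {K : Type*} [Field K] (n m : ℕ)
    (P : Fin m → Ideal (MvPolynomial (Fin n) K))
    (hP : ∀ i, IsNonzeroMonomialPrime (P i))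
    (hnc : ∀ i j, i < j → ¬ P j ≤ P i) :
    ∃ k : Fin m → ℕ, (∀ i, 0 < k i) ∧
      ∀ t : ℕ, 0 < t →
        associatedPrimes (MvPolynomial (Fin n) K)
            (MvPolynomial (Fin n) K ⧸ (⨅ i, P i ^ (t * k i))) =
          Set.range P := by
  choose F hF hPF using hP
  obtain rfl : P = fun i => Ideal.span (X '' F i) := funext hPF
  refine ⟨fun i => 2 ^ (i : ℕ), fun i => by positivity, fun t ht => ?_⟩
  have hk : ∀ i : Fin m, t * 2 ^ (i : ℕ) ≠ 0 := fun i => by positivity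
  refine subset_antisymm ?_ ?_
  · refine (associatedPrimes_quotient_iInf_subset
      fun i => isPrimary_span_X_image_pow _ (hk i)).trans ?_
    rintro _ ⟨i, rfl⟩
    exact ⟨i, (radical_span_X_image_pow _ (hk i)).symm⟩
  · rintro _ ⟨i, rfl⟩
    have hFnc : ∀ i j, i < j → ¬ F j ⊆ F i := fun i j hij hsub =>
      hnc i j hij (Ideal.span_mono (Set.image_mono hsub))
    obtain ⟨d, hdi, hdj⟩ :=
      exists_weight_indicator_succ_eq_and_le hF hFnc (Fin.sum_Iio_mul_two_pow_lt ht) i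
    exact span_X_image_mem_associatedPrimes hdi hdj

/-- Given pairwise distinct nonzero monomial prime ideals `P_1, ..., P_m` with
`P_j ⊄ P_i` for `i < j`, there are positive integers `k_1, ..., k_m` such that
`Ass(S/(P_1^{t k_1} ∩ ... ∩ P_m^{t k_m})) = {P_1, ..., P_m}` for every `t > 0`. -/
theorem stmt5 {K : Type*} [Field K] (n m : ℕ)
    (P : Fin m → Ideal (MvPolynomial (Fin n) K))
    (hP : ∀ i, IsNonzeroMonomialPrime (P i))
    (hdistinct : ∀ i j, i ≠ j → P i ≠ P j)
    (hnc : ∀ i j, i < j → ¬ P j ≤ P i) :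
    ∃ k : Fin m → ℕ, (∀ i, 0 < k i) ∧
      ∀ t : ℕ, 0 < t →
        associatedPrimes (MvPolynomial (Fin n) K)
            (MvPolynomial (Fin n) K ⧸ (⨅ i, P i ^ (t * k i))) =
          Set.range P :=
  stmt5_general n m P hP hnc
end
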